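/- arXiv:1807.10970 — 3 statements merged into one kernel-verified Lean document; each statement's English description precedes it below -/
import Mathlib

section
/- Let P be a Borel probability measure on ℝ with finite second moment that is symmetric about 0, and suppose that for some n ∈ ℕ the n-principal set of P is unique. Then this unique n-principal set α satisfies α = -α, i.e., it is symmetric about 0. -/
open MeasureTheory

/-!
Negation preserves the symmetric measure `P` and turns the distortion of `-α` into that of `α`,
so `-α` is again an `n`-principal set; by uniqueness it equals `α`.
-/

/-- Distortion error of a finite set `β` with respect to `P`. -/
noncomputable def distortion (P : Measure ℝ) (β : Finset ℝ) : ℝ :=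
  ∫ x, (⨅ b : β, (x - (b : ℝ)) ^ 2) ∂P

/-- The `n`-th quantization error of order 2 for `P`. -/
noncomputable def quantErr (P : Measure ℝ) (n : ℕ) : ℝ :=
  sInf {v | ∃ β : Finset ℝ, β.Nonempty ∧ β.card ≤ n ∧ v = distortion P β}

/-- `α` is an `n`-principal set (optimal set of `n`-means) for `P`. -/
def IsPrincipal (P : Measure ℝ) (n : ℕ) (α : Finset ℝ) : Prop :=
  α.Nonempty ∧ α.card ≤ n ∧ distortion P α = quantErr P n

theorem Finset.iInf_subtype_image {α β γ : Type*} [InfSet γ] [DecidableEq β]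
    (s : Finset α) (g : α → β) (f : β → γ) :
    ⨅ b : s.image g, f b = ⨅ a : s, f (g a) := by
  have hsurj : Function.Surjective fun a : s => (⟨g a, mem_image_of_mem g a.2⟩ : s.image g) := by
    rintro ⟨b, hb⟩
    obtain ⟨a, ha, rfl⟩ := mem_image.1 hb
    exact ⟨⟨a, ha⟩, rfl⟩
  exact (hsurj.iInf_comp _).symm

theorem distortion_image_neg {P : Measure ℝ} (hsym : P.map (fun x : ℝ => -x) = P)
    (α : Finset ℝ) : distortion P (α.image (fun a => -a)) = distortion P α := by
  calc distortion P (α.image (fun a => -a))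
      = ∫ x, ⨅ a : α, (-x - (a : ℝ)) ^ 2 ∂P := by
        refine integral_congr_ae (.of_forall fun x => ?_)
        refine (α.iInf_subtype_image _ (fun b => (x - b) ^ 2)).trans (iInf_congr fun a => ?_)
        ring
    _ = distortion P α := by
        conv_rhs => rw [distortion, ← hsym]
        exact (integral_map_equiv (MeasurableEquiv.neg ℝ) fun x => ⨅ a : α, (x - (a : ℝ)) ^ 2).symm

theorem IsPrincipal.image_neg {P : Measure ℝ} (hsym : P.map (fun x : ℝ => -x) = P) {n : ℕ}
    {α : Finset ℝ} (hα : IsPrincipal P n α) : IsPrincipal P n (α.image (fun a => -a)) :=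
  ⟨hα.1.image _, Finset.card_image_le.trans hα.2.1, (distortion_image_neg hsym α).trans hα.2.2⟩

theorem unique_principal_symmetric_general (P : Measure ℝ)
    (hsym : P.map (fun x : ℝ => -x) = P)
    (n : ℕ) (huniq : ∃! α : Finset ℝ, IsPrincipal P n α)
    (α : Finset ℝ) (hα : IsPrincipal P n α) :
    α.image (fun a => -a) = α :=
  huniq.unique (hα.image_neg hsym) hα

/-- If the `n`-principal set of a symmetric measure is unique, then it is symmetric about 0. -/
theorem unique_principal_symmetric (P : Measure ℝ) [IsProbabilityMeasure P]
    (hmom : Integrable (fun x => x ^ 2) P)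
    (hsym : P.map (fun x : ℝ => -x) = P)
    (n : ℕ) (huniq : ∃! α : Finset ℝ, IsPrincipal P n α)
    (α : Finset ℝ) (hα : IsPrincipal P n α) :
    α.image (fun a => -a) = α :=
  unique_principal_symmetric_general P hsym n huniq α hα
end

section
/- Let P be a continuous Borel probability measure on ℝ with finite second moment, symmetric about 0, with P({0}) = 0, and let Q = P(· | [0,∞)) be its one-tailed conditional version. Then for every k ∈ ℕ, the quantization errors satisfy V_{2k}(P) ≤ V_k(Q): for any set α of k points in (0,∞), the distortion error of α ∪ (-α) for P equals the distortion error of α for Q. -/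
open MeasureTheory

open Set Metric
open scoped ProbabilityTheory

/-!
Write the pointwise error `⨅ b ∈ β, (x - b)²` as `infDist x β ^ 2`. For a symmetrized set
`α ∪ -α` it is an even function of `x`, so by the symmetry of `P` its `P`-integral is twice its
integral over `[0, ∞)`; since `P [0, ∞) = 1/2`, that is its `Q`-integral. On `[0, ∞)` the points
of `-α` are never closer than those of `α` when `α ⊆ (0, ∞)`, which gives the equality of
distortions. For an arbitrary `β` with at most `k` points, `β ∪ -β` has at most `2k` points and
pointwise error at most that of `β`, which gives `V_{2k}(P) ≤ V_k(Q)`.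
-/

section InfDist

variable {E : Type*} [NormedAddCommGroup E]

theorem infDist_neg_neg (x : E) (s : Set E) : infDist (-x) (-s) = infDist x s := by
  rw [← image_neg_eq_neg, infDist_image isometry_neg]

theorem infDist_neg_union_neg (x : E) (s : Set E) :
    infDist (-x) (s ∪ -s) = infDist x (s ∪ -s) := by
  rw [← infDist_neg_neg x, Set.union_neg, neg_neg, union_comm (-s)]

theorem integrable_infDist_sq [MeasurableSpace E] [OpensMeasurableSpace E] {μ : Measure E}
    [IsFiniteMeasure μ] (hμ : Integrable (fun x => ‖x‖ ^ 2) μ) (s : Set E) :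
    Integrable (fun x => infDist x s ^ 2) μ := by
  refine ((hμ.const_mul 2).add (integrable_const (2 * infDist 0 s ^ 2))).mono'
    ((continuous_infDist_pt s).pow 2).aestronglyMeasurable (ae_of_all _ fun x => ?_)
  have h : infDist x s ≤ infDist 0 s + ‖x‖ := by
    simpa using infDist_le_infDist_add_dist (x := x) (y := 0) (s := s)
  rw [Real.norm_of_nonneg (by positivity)]
  show _ ≤ 2 * ‖x‖ ^ 2 + 2 * infDist 0 s ^ 2
  nlinarith [infDist_nonneg (x := x) (s := s), infDist_nonneg (x := (0 : E)) (s := s),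
    sq_nonneg (infDist 0 s - ‖x‖)]

end InfDist

theorem iInf_sq_sub_eq_infDist_sq (β : Finset ℝ) (x : ℝ) :
    ⨅ b : β, (x - b) ^ 2 = infDist x β ^ 2 := by
  rcases β.eq_empty_or_nonempty with rfl | hβ
  · simp
  have : Nonempty β := hβ.to_subtype
  obtain ⟨b, hb, hxb⟩ := β.finite_toSet.isCompact.exists_infDist_eq_dist hβ x
  refine le_antisymm ((ciInf_le (Finite.bddBelow_range _) ⟨b, hb⟩).trans_eq ?_)
    (le_ciInf fun c => ?_)
  · rw [hxb, Real.dist_eq, sq_abs]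
  · rw [← sq_abs (x - c), ← Real.dist_eq]
    gcongr
    · exact infDist_nonneg
    · exact infDist_le_dist_of_mem c.2

theorem distortion_eq_integral_infDist_sq (P : Measure ℝ) (β : Finset ℝ) :
    distortion P β = ∫ x, infDist x β ^ 2 ∂P := by
  simp only [distortion, iInf_sq_sub_eq_infDist_sq]

theorem infDist_union_neg_of_nonneg {s : Set ℝ} (hs : s ⊆ Ici 0) {x : ℝ} (hx : 0 ≤ x) :
    infDist x (s ∪ -s) = infDist x s := by
  rcases s.eq_empty_or_nonempty with rfl | hne
  · simp
  refine le_antisymm (infDist_le_infDist_of_subset subset_union_left hne)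
    ((le_infDist (hne.mono subset_union_left)).2 ?_)
  rintro y (hy | hy)
  · exact infDist_le_dist_of_mem hy
  · have hy0 : 0 ≤ -y := hs hy
    refine (infDist_le_dist_of_mem (mem_neg.1 hy)).trans ?_
    rw [Real.dist_eq, Real.dist_eq, abs_of_nonneg (by linarith : 0 ≤ x - y)]
    exact abs_le.2 ⟨by linarith, by linarith⟩

section Symmetric

variable {P : Measure ℝ} {f : ℝ → ℝ}

theorem setIntegral_Iio_eq_setIntegral_Ioi_of_even (hsym : P.map (fun x => -x) = P)
    (heven : ∀ x, f (-x) = f x) : ∫ x in Iio 0, f x ∂P = ∫ x in Ioi 0, f x ∂P := by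
  conv_rhs => rw [← hsym, measurableEmbedding_neg.setIntegral_map]
  simp [heven]

theorem integral_eq_two_mul_setIntegral_Ici_of_even (hsym : P.map (fun x => -x) = P)
    (h0 : P {0} = 0) (hf : Integrable f P) (heven : ∀ x, f (-x) = f x) :
    ∫ x, f x ∂P = 2 * ∫ x in Ici 0, f x ∂P := by
  rw [← integral_add_compl measurableSet_Ici hf, compl_Ici,
    setIntegral_Iio_eq_setIntegral_Ioi_of_even hsym heven, ← integral_Ici_eq_integral_Ioi' h0,
    two_mul]

theorem measureReal_Ici_zero_of_symm [IsProbabilityMeasure P] (hsym : P.map (fun x => -x) = P)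
    (h0 : P {0} = 0) : P.real (Ici 0) = 1 / 2 := by
  have := integral_eq_two_mul_setIntegral_Ici_of_even hsym h0 (integrable_const (1 : ℝ))
    fun _ => rfl
  simp only [integral_const, probReal_univ, smul_eq_mul, mul_one, MeasurableSet.univ,
    measureReal_restrict_apply, univ_inter] at this
  linarith

theorem integral_cond_Ici_zero_of_symm [IsProbabilityMeasure P]
    (hsym : P.map (fun x => -x) = P) (h0 : P {0} = 0) (f : ℝ → ℝ) :
    ∫ x, f x ∂P[|Ici 0] = 2 * ∫ x in Ici 0, f x ∂P := by
  rw [ProbabilityTheory.cond, integral_smul_measure, ENNReal.toReal_inv, ← measureReal_def,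
    measureReal_Ici_zero_of_symm hsym h0]
  norm_num

end Symmetric

section Quantization

variable (P : Measure ℝ)

theorem distortion_nonneg (β : Finset ℝ) : 0 ≤ distortion P β :=
  integral_nonneg fun _ => Real.iInf_nonneg fun _ => sq_nonneg _

theorem quantErr_zero : quantErr P 0 = 0 := by
  simp [quantErr, Finset.nonempty_iff_ne_empty]

variable {P}

theorem quantErr_le_distortion {n : ℕ} {β : Finset ℝ} (hβ : β.Nonempty) (hcard : β.card ≤ n) :
    quantErr P n ≤ distortion P β :=
  csInf_le ⟨0, by rintro _ ⟨γ, -, -, rfl⟩; exact distortion_nonneg P γ⟩ ⟨β, hβ, hcard, rfl⟩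

theorem quantErr_le_quantErr_of_forall {Q : Measure ℝ} {n k : ℕ} (hk : 0 < k)
    (h : ∀ β : Finset ℝ, β.Nonempty → β.card ≤ k →
      ∃ γ : Finset ℝ, γ.Nonempty ∧ γ.card ≤ n ∧ distortion P γ ≤ distortion Q β) :
    quantErr P n ≤ quantErr Q k := by
  refine le_csInf ⟨_, {0}, Finset.singleton_nonempty 0, hk, rfl⟩ ?_
  rintro _ ⟨β, hβ, hcard, rfl⟩
  obtain ⟨γ, hγ, hγcard, hle⟩ := h β hβ hcard
  exact (quantErr_le_distortion hγ hγcard).trans hle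

end Quantization

theorem card_union_image_neg_le (β : Finset ℝ) :
    (β ∪ β.image (fun a => -a)).card ≤ 2 * β.card := by
  have := Finset.card_image_le (s := β) (f := fun a => -a)
  have := Finset.card_union_le β (β.image fun a => -a)
  omega

theorem quantErr_two_k_le_general (P : Measure ℝ) [IsProbabilityMeasure P]
    (hmom : Integrable (fun x => x ^ 2) P)
    (hsym : P.map (fun x : ℝ => -x) = P)
    (h0 : P {0} = 0)
    (Q : Measure ℝ) (hQ : Q = (P (Set.Ici (0 : ℝ)))⁻¹ • P.restrict (Set.Ici (0 : ℝ))) :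
    ∀ k : ℕ, quantErr P (2 * k) ≤ quantErr Q k ∧
      ∀ α : Finset ℝ, α.card = k → (↑α : Set ℝ) ⊆ Set.Ioi (0 : ℝ) →
        distortion P (α ∪ α.image (fun a => -a)) = distortion Q α := by
  have hQ' : Q = P[|Ici 0] := hQ
  have hint : ∀ s : Set ℝ, Integrable (fun x => infDist x s ^ 2) P :=
    integrable_infDist_sq (by simpa using hmom)
  have hQdist : ∀ β : Finset ℝ, distortion Q β = 2 * ∫ x in Ici 0, infDist x β ^ 2 ∂P := by
    intro β
    rw [distortion_eq_integral_infDist_sq, hQ', integral_cond_Ici_zero_of_symm hsym h0]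
  have hPdist : ∀ β : Finset ℝ, distortion P (β ∪ β.image (fun a => -a)) =
      2 * ∫ x in Ici 0, infDist x (β ∪ -β) ^ 2 ∂P := by
    intro β
    rw [distortion_eq_integral_infDist_sq, Finset.coe_union, Finset.coe_image, image_neg_eq_neg]
    exact integral_eq_two_mul_setIntegral_Ici_of_even hsym h0 (hint _)
      fun x => by rw [infDist_neg_union_neg]
  intro k
  refine ⟨?_, fun α _ hα => ?_⟩
  · rcases k.eq_zero_or_pos with rfl | hk
    · simp [quantErr_zero]
    refine quantErr_le_quantErr_of_forall hk fun β hβ hcard =>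
      ⟨_, hβ.mono Finset.subset_union_left, (card_union_image_neg_le β).trans (by omega), ?_⟩
    rw [hPdist, hQdist]
    gcongr 2 * ?_
    refine setIntegral_mono (hint _).integrableOn (hint _).integrableOn fun x => ?_
    gcongr
    · exact infDist_nonneg
    · exact infDist_le_infDist_of_subset subset_union_left hβ
  · rw [hPdist, hQdist]
    congr 1
    refine setIntegral_congr_fun measurableSet_Ici fun x hx => ?_
    rw [infDist_union_neg_of_nonneg (hα.trans Ioi_subset_Ici_self) hx]

/-- For a symmetric continuous measure `P` with one-tailed version `Q`, one has
`V_{2k}(P) ≤ V_k(Q)`, and symmetrized sets have for `P` the distortion that their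
positive half has for `Q`. -/
theorem quantErr_two_k_le (P : Measure ℝ) [IsProbabilityMeasure P]
    (hmom : Integrable (fun x => x ^ 2) P)
    (hcont : ∀ x : ℝ, P {x} = 0)
    (hsym : P.map (fun x : ℝ => -x) = P)
    (h0 : P {0} = 0)
    (Q : Measure ℝ) (hQ : Q = (P (Set.Ici (0 : ℝ)))⁻¹ • P.restrict (Set.Ici (0 : ℝ))) :
    ∀ k : ℕ, quantErr P (2 * k) ≤ quantErr Q k ∧
      ∀ α : Finset ℝ, α.card = k → (↑α : Set ℝ) ⊆ Set.Ioi (0 : ℝ) →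
        distortion P (α ∪ α.image (fun a => -a)) = distortion Q α :=
  quantErr_two_k_le_general P hmom hsym h0 Q hQ
end

section
/- Let P be a probability measure on ℝ with density f and finite second moment, and let α = {a₁ < ⋯ < aₙ} be an n-principal set for P with each Voronoi region having positive P-measure. Then α is self-consistent: for each i, a_i = (∫_{m_{i-1}}^{m_i} x f(x) dx) / (∫_{m_{i-1}}^{m_i} f(x) dx), where m₀ = -∞, mₙ = ∞, and m_i = (a_i+a_{i+1})/2. -/
/-!
On the closed Voronoi interval `s` of `a i` the nearest point of `α` is `a i`, and off `s` some
other point of `α` is at least as near. Replacing `a i` by the conditional mean `c` of `s`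
therefore does not increase the squared error off `s`, while on `s` it turns
`∫ₛ (x - a i)²` into `∫ₛ (x - c)² = ∫ₛ (x - a i)² - P(s) (a i - c)²`. Optimality of `α`
forces `a i = c`.
-/

open MeasureTheory

open Set

section SquaredError

variable {μ : Measure ℝ} [IsFiniteMeasure μ]

theorem integral_sub_sq_eq (hμ : MemLp id 2 μ) (t : ℝ) :
    ∫ x, (x - t) ^ 2 ∂μ = ∫ x, x ^ 2 ∂μ - 2 * t * ∫ x, x ∂μ + t ^ 2 * μ.real univ := by
  have h1 : Integrable (fun x : ℝ => x) μ := hμ.integrable one_le_two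
  have h2 : Integrable (fun x : ℝ => x ^ 2) μ := hμ.integrable_sq
  have hexp : ∀ x : ℝ, (x - t) ^ 2 = x ^ 2 - 2 * t * x + t ^ 2 := fun x => by ring
  simp_rw [hexp]
  rw [integral_add (f := fun x => x ^ 2 - 2 * t * x) (h2.sub (h1.const_mul _)) (integrable_const _),
    integral_sub h2 (h1.const_mul _), integral_const_mul, integral_const, smul_eq_mul,
    mul_comm (μ.real univ)]

theorem integral_sub_average_sq_lt (hμ : MemLp id 2 μ) (hμ0 : μ ≠ 0) {t : ℝ}
    (ht : t ≠ ⨍ y, y ∂μ) :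
    ∫ x, (x - ⨍ y, y ∂μ) ^ 2 ∂μ < ∫ x, (x - t) ^ 2 ∂μ := by
  have : NeZero μ := ⟨hμ0⟩
  have hM : 0 < μ.real univ := measureReal_univ_pos
  have hmean : ∫ x, x ∂μ = μ.real univ * ⨍ y, y ∂μ := by
    rw [average_eq, smul_eq_mul, mul_inv_cancel_left₀ hM.ne']
  have hgap : 0 < μ.real univ * (t - ⨍ y, y ∂μ) ^ 2 := by
    have := sub_ne_zero.2 ht
    positivity
  rw [integral_sub_sq_eq hμ, integral_sub_sq_eq hμ, hmean]
  linear_combination hgap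

end SquaredError

section Distortion

variable {μ : Measure ℝ} {α : Finset ℝ} {x a b c : ℝ}

theorem iInf_sq_sub_le (hb : b ∈ α) (x : ℝ) : ⨅ d : α, (x - (d : ℝ)) ^ 2 ≤ (x - b) ^ 2 :=
  ciInf_le ⟨0, by rintro _ ⟨d, rfl⟩; positivity⟩ (⟨b, hb⟩ : α)

theorem iInf_sq_sub_eq (hb : b ∈ α) (h : ∀ d ∈ α, (x - b) ^ 2 ≤ (x - d) ^ 2) :
    ⨅ d : α, (x - (d : ℝ)) ^ 2 = (x - b) ^ 2 :=
  have : Nonempty α := ⟨⟨b, hb⟩⟩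
  le_antisymm (iInf_sq_sub_le hb x) (le_ciInf fun d => h d d.2)

theorem iInf_sq_sub_insert_erase_le (hb : b ∈ α) (hba : b ≠ a) (hx : (x - b) ^ 2 ≤ (x - a) ^ 2) :
    ⨅ d : (insert c (α.erase a) : Finset ℝ), (x - (d : ℝ)) ^ 2 ≤ ⨅ d : α, (x - (d : ℝ)) ^ 2 := by
  have : Nonempty α := ⟨⟨b, hb⟩⟩
  refine le_ciInf fun ⟨d, hd⟩ => ?_
  by_cases hda : d = a
  · subst hda
    exact (iInf_sq_sub_le (Finset.mem_insert_of_mem (Finset.mem_erase.2 ⟨hba, hb⟩)) x).trans hx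
  · exact iInf_sq_sub_le (Finset.mem_insert_of_mem (Finset.mem_erase.2 ⟨hda, hd⟩)) x

theorem integrable_sq_sub [IsFiniteMeasure μ] (hμ : MemLp id 2 μ) (b : ℝ) :
    Integrable (fun x => (x - b) ^ 2) μ :=
  (hμ.sub (memLp_const b)).integrable_sq

theorem integrable_iInf_sq_sub [IsFiniteMeasure μ] (hμ : MemLp id 2 μ) (hα : α.Nonempty) :
    Integrable (fun x => ⨅ d : α, (x - (d : ℝ)) ^ 2) μ := by
  obtain ⟨b, hb⟩ := hα
  have hmeas : Measurable fun x => ⨅ d : α, (x - (d : ℝ)) ^ 2 := .iInf fun _ => by fun_prop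
  refine (integrable_sq_sub hμ b).mono' hmeas.aestronglyMeasurable (ae_of_all _ fun x => ?_)
  rw [Real.norm_eq_abs, abs_of_nonneg (Real.iInf_nonneg fun _ => sq_nonneg _)]
  exact iInf_sq_sub_le hb x

theorem distortion_nonneg_s14 : 0 ≤ distortion μ α :=
  integral_nonneg fun _ => Real.iInf_nonneg fun _ => sq_nonneg _

theorem IsPrincipal.distortion_le {n : ℕ} (hα : IsPrincipal μ n α) {β : Finset ℝ}
    (hβ : β.Nonempty) (hcard : β.card ≤ n) : distortion μ α ≤ distortion μ β :=
  hα.2.2 ▸ csInf_le ⟨0, by rintro _ ⟨γ, -, -, rfl⟩; exact distortion_nonneg_s14⟩ ⟨β, hβ, hcard, rfl⟩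

theorem distortion_insert_erase_lt [IsFiniteMeasure μ] (hμ : MemLp id 2 μ) (ha : a ∈ α)
    {s : Set ℝ} (hs : MeasurableSet s) (hnear : ∀ x ∈ s, ∀ b ∈ α, (x - a) ^ 2 ≤ (x - b) ^ 2)
    (hfar : ∀ x ∉ s, ∃ b ∈ α, b ≠ a ∧ (x - b) ^ 2 ≤ (x - a) ^ 2)
    (hc : ∫ x in s, (x - c) ^ 2 ∂μ < ∫ x in s, (x - a) ^ 2 ∂μ) :
    distortion μ (insert c (α.erase a)) < distortion μ α := by
  have hβ := integrable_iInf_sq_sub hμ (Finset.insert_nonempty c (α.erase a))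
  have hα := integrable_iInf_sq_sub hμ ⟨a, ha⟩
  rw [distortion, distortion, ← integral_add_compl hs hβ, ← integral_add_compl hs hα]
  refine add_lt_add_of_lt_of_le ?_ ?_
  · calc _ ≤ ∫ x in s, (x - c) ^ 2 ∂μ :=
          setIntegral_mono hβ.integrableOn (integrable_sq_sub hμ c).integrableOn
            fun x => iInf_sq_sub_le (Finset.mem_insert_self c _) x
      _ < ∫ x in s, (x - a) ^ 2 ∂μ := hc
      _ = _ := setIntegral_congr_fun hs fun x hx => (iInf_sq_sub_eq ha (hnear x hx)).symm
  · refine setIntegral_mono_on hβ.integrableOn hα.integrableOn hs.compl fun x hx => ?_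
    obtain ⟨b, hb, hba, hxb⟩ := hfar x hx
    exact iInf_sq_sub_insert_erase_le hb hba hxb

theorem IsPrincipal.eq_setAverage [IsFiniteMeasure μ] (hμ : MemLp id 2 μ) {n : ℕ}
    (hα : IsPrincipal μ n α) (ha : a ∈ α) {s : Set ℝ} (hs : MeasurableSet s)
    (hnear : ∀ x ∈ s, ∀ b ∈ α, (x - a) ^ 2 ≤ (x - b) ^ 2)
    (hfar : ∀ x ∉ s, ∃ b ∈ α, b ≠ a ∧ (x - b) ^ 2 ≤ (x - a) ^ 2) (hs0 : μ s ≠ 0) :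
    a = ⨍ x in s, x ∂μ := by
  by_contra hne
  have hcard : (insert (⨍ x in s, x ∂μ) (α.erase a)).card ≤ n :=
    (Finset.card_insert_le _ _).trans ((Finset.card_erase_add_one ha).trans_le hα.2.1)
  have hlt := distortion_insert_erase_lt hμ ha hs hnear hfar
    (integral_sub_average_sq_lt (hμ.restrict s) (Measure.restrict_eq_zero.not.2 hs0) hne)
  exact (hα.distortion_le (Finset.insert_nonempty _ _) hcard).not_gt hlt

end Distortion

section Voronoi

/-- The `i`-th cell `[m (i - 1), m i]`, with the conventions `m 0 = -∞` and `m n = ∞`. -/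
def voronoiCell (n : ℕ) (m : ℕ → ℝ) (i : ℕ) : Set ℝ :=
  {x | (1 < i → m (i - 1) ≤ x) ∧ (i < n → x ≤ m i)}

theorem measurableSet_voronoiCell (n : ℕ) (m : ℕ → ℝ) (i : ℕ) :
    MeasurableSet (voronoiCell n m i) :=
  measurableSet_setOfPred.2 <|
    (measurable_const.imp (measurableSet_setOfPred.1 measurableSet_Ici)).and
      (measurable_const.imp (measurableSet_setOfPred.1 measurableSet_Iic))

theorem sq_sub_le_sq_sub_of_le_midpoint {x a b : ℝ} (hab : a ≤ b) (hx : x ≤ (a + b) / 2) :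
    (x - a) ^ 2 ≤ (x - b) ^ 2 := by
  nlinarith

theorem sq_sub_le_sq_sub_of_midpoint_le {x a b : ℝ} (hba : b ≤ a) (hx : (b + a) / 2 ≤ x) :
    (x - a) ^ 2 ≤ (x - b) ^ 2 := by
  nlinarith

variable {n i : ℕ} {a m : ℕ → ℝ} {x : ℝ}

theorem sq_sub_le_of_mem_voronoiCell (ha : MonotoneOn a (Icc 1 n))
    (hm : ∀ i, m i = (a i + a (i + 1)) / 2) (hi : i ∈ Icc 1 n) {j : ℕ} (hj : j ∈ Icc 1 n)
    (hx : x ∈ voronoiCell n m i) : (x - a i) ^ 2 ≤ (x - a j) ^ 2 := by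
  have ⟨hi1, hin⟩ := hi
  have ⟨hj1, hjn⟩ := hj
  obtain ⟨hleft, hright⟩ := hx
  rcases lt_trichotomy j i with hji | rfl | hij
  · have hbound := hleft (by omega)
    rw [hm, Nat.sub_add_cancel (by omega)] at hbound
    have := ha hj (show i - 1 ∈ Icc 1 n from ⟨by omega, by omega⟩) (by omega)
    exact sq_sub_le_sq_sub_of_midpoint_le (ha hj hi hji.le) (by linarith)
  · exact le_rfl
  · have hbound := hright (by omega)
    rw [hm] at hbound
    have := ha (show i + 1 ∈ Icc 1 n from ⟨by omega, by omega⟩) hj hij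
    exact sq_sub_le_sq_sub_of_le_midpoint (ha hi hj hij.le) (by linarith)

theorem exists_sq_sub_le_of_not_mem_voronoiCell (ha : MonotoneOn a (Icc 1 n))
    (hm : ∀ i, m i = (a i + a (i + 1)) / 2) (hi : i ∈ Icc 1 n) (hx : x ∉ voronoiCell n m i) :
    ∃ j ∈ Icc 1 n, j ≠ i ∧ (x - a j) ^ 2 ≤ (x - a i) ^ 2 := by
  have hin := hi.2
  simp only [voronoiCell, mem_ofPred_eq, not_and_or, Classical.not_imp, not_le] at hx
  rcases hx with ⟨hi1', hlt⟩ | ⟨hin', hgt⟩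
  · rw [hm, Nat.sub_add_cancel hi1'.le] at hlt
    refine ⟨i - 1, ⟨by omega, by omega⟩, by omega, ?_⟩
    exact sq_sub_le_sq_sub_of_le_midpoint (ha ⟨by omega, by omega⟩ hi (Nat.sub_le i 1)) hlt.le
  · rw [hm] at hgt
    refine ⟨i + 1, ⟨by omega, by omega⟩, by omega, ?_⟩
    exact sq_sub_le_sq_sub_of_midpoint_le (ha hi ⟨by omega, by omega⟩ (Nat.le_succ i)) hgt.le

theorem IsPrincipal.eq_setAverage_voronoiCell {μ : Measure ℝ} [IsFiniteMeasure μ]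
    (hμ : MemLp id 2 μ) (ha : StrictMonoOn a (Icc 1 n)) (hm : ∀ i, m i = (a i + a (i + 1)) / 2)
    (hα : IsPrincipal μ n ((Finset.Icc 1 n).image a)) (hi : i ∈ Icc 1 n)
    (hμi : μ (voronoiCell n m i) ≠ 0) :
    a i = ⨍ x in voronoiCell n m i, x ∂μ := by
  refine hα.eq_setAverage hμ (Finset.mem_image_of_mem a (Finset.mem_Icc.2 hi)) (measurableSet_voronoiCell n m i)
    (fun x hx => Finset.forall_mem_image.2 fun j hj =>
      sq_sub_le_of_mem_voronoiCell ha.monotoneOn hm hi (Finset.mem_Icc.1 hj) hx)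
    (fun x hx => ?_) hμi
  obtain ⟨j, hj, hji, hle⟩ := exists_sq_sub_le_of_not_mem_voronoiCell ha.monotoneOn hm hi hx
  exact ⟨a j, Finset.mem_image_of_mem a (Finset.mem_Icc.2 hj), ha.injOn.ne hj hi hji, hle⟩

end Voronoi

section Density

variable {X : Type*} [MeasurableSpace X] {μ : Measure X} {f : X → ℝ}

theorem integrable_withDensity_ofReal_iff (hf0 : ∀ x, 0 ≤ f x) (hfm : AEMeasurable f μ)
    {g : X → ℝ} :
    Integrable g (μ.withDensity fun x => ENNReal.ofReal (f x)) ↔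
      Integrable (fun x => g x * f x) μ := by
  rw [integrable_withDensity_iff_integrable_smul₀' hfm.ennreal_ofReal
    (ae_of_all _ fun _ => ENNReal.ofReal_lt_top)]
  simp only [ENNReal.toReal_ofReal (hf0 _), smul_eq_mul, mul_comm]

theorem setIntegral_withDensity_ofReal (hf0 : ∀ x, 0 ≤ f x) (hfm : AEMeasurable f μ)
    {s : Set X} (hs : MeasurableSet s) (g : X → ℝ) :
    ∫ x in s, g x ∂μ.withDensity (fun x => ENNReal.ofReal (f x)) = ∫ x in s, g x * f x ∂μ := by
  rw [setIntegral_withDensity_eq_setIntegral_toReal_smul₀ hfm.ennreal_ofReal.restrict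
    (ae_of_all _ fun _ => ENNReal.ofReal_lt_top) g hs]
  simp only [ENNReal.toReal_ofReal (hf0 _), smul_eq_mul, mul_comm]

end Density

theorem principal_self_consistent_general (f : ℝ → ℝ) (hf0 : ∀ x, 0 ≤ f x)
    (hf1 : ∫ x, f x = 1) (hmom : Integrable (fun x => x ^ 2 * f x))
    (P : Measure ℝ) (hP : P = volume.withDensity (fun x => ENNReal.ofReal (f x)))
    (n : ℕ) (a : ℕ → ℝ)
    (ha : ∀ i j, 1 ≤ i → i < j → j ≤ n → a i < a j)
    (m : ℕ → ℝ) (hm : ∀ i, m i = (a i + a (i + 1)) / 2)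
    (hprin : IsPrincipal P n ((Finset.Icc 1 n).image a))
    (hpos : ∀ i ∈ Finset.Icc 1 n,
      0 < ∫ x in {x : ℝ | (1 < i → m (i - 1) ≤ x) ∧ (i < n → x ≤ m i)}, f x) :
    ∀ i ∈ Finset.Icc 1 n,
      a i = (∫ x in {x : ℝ | (1 < i → m (i - 1) ≤ x) ∧ (i < n → x ≤ m i)}, x * f x) /
            (∫ x in {x : ℝ | (1 < i → m (i - 1) ≤ x) ∧ (i < n → x ≤ m i)}, f x) := by
  intro i hi
  change a i = (∫ x in voronoiCell n m i, x * f x) / ∫ x in voronoiCell n m i, f x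
  have hfint : Integrable f := .of_integral_ne_zero (by simp [hf1])
  have hfm := hfint.aemeasurable
  have : IsFiniteMeasure P := hP ▸ isFiniteMeasure_withDensity_ofReal hfint.2
  have hP2 : MemLp id 2 P := (memLp_two_iff_integrable_sq aestronglyMeasurable_id).2
    (hP ▸ (integrable_withDensity_ofReal_iff hf0 hfm).2 hmom)
  have hdens : ∀ g : ℝ → ℝ,
      ∫ x in voronoiCell n m i, g x ∂P = ∫ x in voronoiCell n m i, g x * f x :=
    hP ▸ setIntegral_withDensity_ofReal hf0 hfm (measurableSet_voronoiCell n m i)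
  have hmass : P.real (voronoiCell n m i) = ∫ x in voronoiCell n m i, f x := by
    simpa using hdens 1
  have hcell : P (voronoiCell n m i) ≠ 0 :=
    (measureReal_ne_zero_iff (measure_ne_top P _)).1 (hmass ▸ (hpos i hi).ne')
  have hstrict : StrictMonoOn a (Icc 1 n) := fun i hi j hj hij => ha i j hi.1 hij hj.2
  rw [hprin.eq_setAverage_voronoiCell hP2 hstrict hm (Finset.mem_Icc.1 hi) hcell, setAverage_eq,
    smul_eq_mul, hmass, hdens fun x => x, inv_mul_eq_div]

/-- An `n`-principal set whose Voronoi regions have positive measure is self-consistent: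
each point is the conditional mean of its Voronoi interval. -/
theorem principal_self_consistent (f : ℝ → ℝ) (hf0 : ∀ x, 0 ≤ f x)
    (hf1 : ∫ x, f x = 1) (hmom : Integrable (fun x => x ^ 2 * f x))
    (P : Measure ℝ) (hP : P = volume.withDensity (fun x => ENNReal.ofReal (f x)))
    (n : ℕ) (hn : 1 ≤ n) (a : ℕ → ℝ)
    (ha : ∀ i j, 1 ≤ i → i < j → j ≤ n → a i < a j)
    (m : ℕ → ℝ) (hm : ∀ i, m i = (a i + a (i + 1)) / 2)
    (hprin : IsPrincipal P n ((Finset.Icc 1 n).image a))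
    (hpos : ∀ i ∈ Finset.Icc 1 n,
      0 < ∫ x in {x : ℝ | (1 < i → m (i - 1) ≤ x) ∧ (i < n → x ≤ m i)}, f x) :
    ∀ i ∈ Finset.Icc 1 n,
      a i = (∫ x in {x : ℝ | (1 < i → m (i - 1) ≤ x) ∧ (i < n → x ≤ m i)}, x * f x) /
            (∫ x in {x : ℝ | (1 < i → m (i - 1) ≤ x) ∧ (i < n → x ≤ m i)}, f x) :=
  principal_self_consistent_general f hf0 hf1 hmom P hP n a ha m hm hprin hpos
end
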